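/- arXiv:2003.05762 — 2 statements merged into one kernel-verified Lean document; each statement's English description precedes it below -/
import Mathlib

section
/- Let n ≥ 3 and let G = D_{2n} be the dihedral group of order 2n. Then the energy of the commuting conjugacy class graph satisfies: E(CCC(G)) = n − 3 if n is odd; E(CCC(G)) = n − 4 if n is even and n/2 is even; and E(CCC(G)) = n − 2 if n is even and n/2 is odd. -/
noncomputable section

open scoped Classical

/-- The adjacency matrix (over `ℝ`) of a simple graph. -/
def adjMat {V : Type*} (G : SimpleGraph V) : Matrix V V ℝ :=
  Matrix.of fun u v => if G.Adj u v then 1 else 0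

/-- The diagonal degree matrix (over `ℝ`) of a simple graph. -/
def degMat {V : Type*} (G : SimpleGraph V) : Matrix V V ℝ :=
  Matrix.diagonal fun v => ({w | G.Adj v w}.ncard : ℝ)

/-- The Laplacian matrix `L(G) = D(G) - A(G)`. -/
def lapMat {V : Type*} (G : SimpleGraph V) : Matrix V V ℝ :=
  degMat G - adjMat G

/-- The signless Laplacian matrix `Q(G) = D(G) + A(G)`. -/
def signlessLapMat {V : Type*} (G : SimpleGraph V) : Matrix V V ℝ :=
  degMat G + adjMat G

/-- The multiset of eigenvalues (with multiplicity) of a real matrix indexed by a finite type,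
i.e. the multiset of roots of its characteristic polynomial. -/
def eigMultiset {V : Type*} (M : Matrix V V ℝ) : Multiset ℝ :=
  if h : Finite V then
    haveI := h
    haveI := Fintype.ofFinite V
    M.charpoly.roots
  else 0

/-- The energy of a graph: the sum of the absolute values of the adjacency eigenvalues. -/
def graphEnergy {V : Type*} (G : SimpleGraph V) : ℝ :=
  ((eigMultiset (adjMat G)).map fun x => |x|).sum

/-- The Laplacian energy `LE(G) = Σ_μ |μ - 2e/v|`, where `e` is the number of edges and
`v` the number of vertices. -/
def lapEnergy {V : Type*} (G : SimpleGraph V) : ℝ :=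
  ((eigMultiset (lapMat G)).map fun mu =>
    |mu - 2 * (G.edgeSet.ncard : ℝ) / (Nat.card V : ℝ)|).sum

/-- The signless Laplacian energy `LE⁺(G) = Σ_ν |ν - 2e/v|`, where `e` is the number of edges
and `v` the number of vertices. -/
def signlessLapEnergy {V : Type*} (G : SimpleGraph V) : ℝ :=
  ((eigMultiset (signlessLapMat G)).map fun nu =>
    |nu - 2 * (G.edgeSet.ncard : ℝ) / (Nat.card V : ℝ)|).sum

/-- The commuting conjugacy class graph of a group `G`: the vertices are the conjugacy classes
of the non-central elements of `G`, and two distinct classes are adjacent if they contain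
commuting representatives. -/
def CCC (G : Type*) [Group G] :
    SimpleGraph {c : ConjClasses G // ∃ g : G, g ∉ Subgroup.center G ∧ ConjClasses.mk g = c} where
  Adj c d := c ≠ d ∧
    ∃ x ∈ ConjClasses.carrier c.1, ∃ y ∈ ConjClasses.carrier d.1, Commute x y
  symm := by
    constructor
    rintro c d ⟨hne, x, hx, y, hy, hxy⟩
    exact ⟨hne.symm, y, hy, x, hx, hxy.symm⟩
  loopless := by
    constructor
    rintro c ⟨hne, -⟩
    exact hne rfl


section AuxSpectral
open Polynomial

lemma eigMultiset_eq {V : Type*} [Fintype V] [DecidableEq V] (M : Matrix V V ℝ) :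
    eigMultiset M = M.charpoly.roots := by
  have hf : Finite V := Finite.of_fintype V
  rw [eigMultiset, dif_pos hf]
  congr!

lemma eval_charpoly' {V : Type*} [Fintype V] [DecidableEq V] (M : Matrix V V ℝ) (x : ℝ) :
    M.charpoly.eval x = (x • (1 : Matrix V V ℝ) - M).det := by
  rw [Matrix.charpoly, ← Polynomial.coe_evalRingHom, RingHom.map_det]
  congr 1
  ext i j
  by_cases h : i = j <;>
    simp [h, Matrix.one_apply, Matrix.charmatrix_apply_eq, Matrix.charmatrix_apply_ne,
      Matrix.sub_apply, Matrix.smul_apply]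

lemma charpoly_adj_top (k : ℕ) :
    (adjMat (⊤ : SimpleGraph (Fin (k+1)))).charpoly = (X + 1) ^ k * (X - C (k : ℝ)) := by
  apply Polynomial.eq_of_infinite_eval_eq
  apply Set.Infinite.mono _ ((Set.finite_singleton (-1 : ℝ)).infinite_compl)
  intro x hx
  have hx1 : x + 1 ≠ 0 := by
    intro h
    apply hx
    have : x = -1 := by linarith
    simp [this]
  have key : x • (1 : Matrix (Fin (k+1)) (Fin (k+1)) ℝ) - adjMat ⊤
      = (x+1) • (1 + Matrix.replicateCol Unit (fun _ => -(x+1)⁻¹) * Matrix.replicateRow Unit (fun _ => (1:ℝ))) := by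
    ext i j
    by_cases h : i = j <;>
      · simp [adjMat, Matrix.one_apply, h, Matrix.mul_apply, Matrix.sub_apply, Matrix.smul_apply,
          Matrix.add_apply, Matrix.replicateCol, Matrix.replicateRow]
        field_simp
        try ring
  simp only [Set.mem_setOf_eq]
  rw [eval_charpoly', key, Matrix.det_smul, Matrix.det_one_add_replicateCol_mul_replicateRow]
  simp only [dotProduct, Finset.sum_const, Finset.card_univ, Fintype.card_fin, smul_eq_mul,
    mul_neg, mul_one, nsmul_eq_mul]
  rw [eval_mul, eval_pow, eval_add, eval_X, eval_one, eval_sub, eval_C]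
  field_simp
  simp only [eval_X]
  push_cast
  ring

lemma charpoly_adj_bot (b : ℕ) :
    (adjMat (⊥ : SimpleGraph (Fin b))).charpoly = X ^ b := by
  have h0 : adjMat (⊥ : SimpleGraph (Fin b)) = 0 := by
    ext i j; simp [adjMat]
  rw [h0, Matrix.charpoly]
  have : Matrix.charmatrix (0 : Matrix (Fin b) (Fin b) ℝ)
      = Matrix.diagonal (fun _ => (X : ℝ[X])) := by
    ext i j
    by_cases h : i = j <;>
      simp [h, Matrix.charmatrix_apply_eq, Matrix.charmatrix_apply_ne, Matrix.diagonal_apply]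
  rw [this, Matrix.det_diagonal]
  simp

lemma adjMat_sum {α β : Type*} (G : SimpleGraph α) (H : SimpleGraph β) :
    adjMat (G ⊕g H) = Matrix.fromBlocks (adjMat G) 0 0 (adjMat H) := by
  ext u v
  rcases u with u|u <;> rcases v with v|v <;>
    simp [adjMat, Matrix.fromBlocks, SimpleGraph.sum]

lemma graphEnergy_congr {α β : Type*} [Fintype α] [Fintype β] {G : SimpleGraph α}
    {H : SimpleGraph β} (e : G ≃g H) : graphEnergy G = graphEnergy H := by
  have h : adjMat G = Matrix.reindex e.toEquiv.symm e.toEquiv.symm (adjMat H) := by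
    ext u v
    simp only [Matrix.reindex_apply, Matrix.submatrix_apply, adjMat, Matrix.of_apply,
      Equiv.symm_symm]
    exact if_congr (e.map_adj_iff).symm rfl rfl
  rw [graphEnergy, graphEnergy, eigMultiset_eq, eigMultiset_eq, h,
    Matrix.charpoly_reindex]

lemma roots_abs_sum_top_aux (a : ℕ) :
    ((((X + 1) ^ a * (X - C (a : ℝ))).roots).map fun x => |x|).sum = 2 * (a : ℝ) := by
  have h1 : ((X + 1 : ℝ[X])) ^ a ≠ 0 := pow_ne_zero _ (by
    intro h
    simpa using congrArg (eval 0) h)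
  have h2 : (X - C (a : ℝ)) ≠ 0 := X_sub_C_ne_zero _
  have hroots1 : (X + 1 : ℝ[X]).roots = {-1} := by
    rw [show (X + 1 : ℝ[X]) = X - C (-1) by simp, roots_X_sub_C]
  rw [Polynomial.roots_mul (mul_ne_zero h1 h2), Polynomial.roots_pow, hroots1, roots_X_sub_C]
  simp [Multiset.map_nsmul, Multiset.sum_nsmul, mul_comm]
  ring

lemma graphEnergy_topbot (a b : ℕ) (ha : 1 ≤ a) :
    graphEnergy ((⊤ : SimpleGraph (Fin a)) ⊕g (⊥ : SimpleGraph (Fin b)))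
      = 2 * ((a : ℝ) - 1) := by
  obtain ⟨c, rfl⟩ : ∃ c, a = c + 1 := ⟨a - 1, by omega⟩
  rw [graphEnergy, eigMultiset_eq, adjMat_sum, Matrix.charpoly_fromBlocks_zero₁₂,
    charpoly_adj_top, charpoly_adj_bot]
  have hX : ((X : ℝ[X]) ^ b) ≠ 0 := pow_ne_zero _ X_ne_zero
  have h1 : ((X + 1 : ℝ[X])) ^ c * (X - C (c : ℝ)) ≠ 0 := by
    apply mul_ne_zero (pow_ne_zero _ ?_) (X_sub_C_ne_zero _)
    intro h
    simpa using congrArg (eval 0) h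
  rw [Polynomial.roots_mul (mul_ne_zero h1 hX), Multiset.map_add, Multiset.sum_add,
    roots_abs_sum_top_aux, Polynomial.roots_pow, roots_X]
  push_cast
  simp [Multiset.map_nsmul, Multiset.sum_nsmul]

lemma graphEnergy_toptop (a : ℕ) (ha : 1 ≤ a) :
    graphEnergy ((⊤ : SimpleGraph (Fin a)) ⊕g (⊤ : SimpleGraph (Fin 2)))
      = 2 * ((a : ℝ) - 1) + 2 := by
  obtain ⟨c, rfl⟩ : ∃ c, a = c + 1 := ⟨a - 1, by omega⟩
  rw [graphEnergy, eigMultiset_eq, adjMat_sum, Matrix.charpoly_fromBlocks_zero₁₂,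
    charpoly_adj_top, show (2 : ℕ) = 1 + 1 from rfl, charpoly_adj_top]
  have h1 : ((X + 1 : ℝ[X])) ^ c * (X - C (c : ℝ)) ≠ 0 := by
    apply mul_ne_zero (pow_ne_zero _ ?_) (X_sub_C_ne_zero _)
    intro h
    simpa using congrArg (eval 0) h
  have h2 : ((X + 1 : ℝ[X])) ^ 1 * (X - C ((1:ℕ) : ℝ)) ≠ 0 := by
    apply mul_ne_zero (pow_ne_zero _ ?_) (X_sub_C_ne_zero _)
    intro h
    simpa using congrArg (eval 0) h
  rw [Polynomial.roots_mul (mul_ne_zero h1 h2), Multiset.map_add, Multiset.sum_add,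
    roots_abs_sum_top_aux, roots_abs_sum_top_aux]
  push_cast
  ring

end AuxSpectral


namespace DihedralGroup

variable {n : ℕ}

lemma inv_r' (i : ZMod n) : (r i)⁻¹ = r (-i) := rfl
lemma inv_sr' (i : ZMod n) : (sr i)⁻¹ = sr i := rfl

lemma isConj_r_iff' {i : ZMod n} {x : DihedralGroup n} :
    IsConj (r i) x ↔ x = r i ∨ x = r (-i) := by
  rw [isConj_iff]
  constructor
  · rintro ⟨c, rfl⟩
    rcases c with j | j
    · left
      rw [inv_r']
      simp only [r_mul_r, r.injEq]
      ring
    · right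
      rw [inv_sr']
      simp only [sr_mul_r, r_mul_sr, sr_mul_sr, r.injEq]
      ring
  · rintro (rfl | rfl)
    · exact ⟨1, by simp⟩
    · refine ⟨sr 0, ?_⟩
      rw [inv_sr']
      simp only [sr_mul_r, sr_mul_sr, r.injEq]
      ring

lemma isConj_sr_iff' {i : ZMod n} {x : DihedralGroup n} :
    IsConj (sr i) x ↔ ∃ t, x = sr (i + 2 * t) := by
  rw [isConj_iff]
  constructor
  · rintro ⟨c, rfl⟩
    rcases c with j | j
    · refine ⟨-j, ?_⟩
      rw [inv_r']
      simp only [r_mul_sr, sr_mul_r, sr.injEq]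
      ring
    · refine ⟨j - i, ?_⟩
      rw [inv_sr']
      simp only [sr_mul_sr, r_mul_sr, sr_mul_r, sr.injEq]
      ring
  · rintro ⟨t, rfl⟩
    refine ⟨r (-t), ?_⟩
    rw [inv_r']
    simp only [r_mul_sr, sr_mul_r, sr.injEq]
    ring

lemma not_isConj_r_sr' {i j : ZMod n} : ¬ IsConj (r i) (sr j) := by
  rw [isConj_iff]
  rintro ⟨c, hc⟩
  rcases c with k | k
  · rw [inv_r'] at hc
    simp only [r_mul_r] at hc
    exact absurd hc (by simp)
  · rw [inv_sr'] at hc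
    simp only [sr_mul_r, sr_mul_sr] at hc
    exact absurd hc (by simp)

lemma commute_r_r' (i j : ZMod n) : Commute (r i) (r j) := by
  show r i * r j = r j * r i
  simp only [r_mul_r, r.injEq]
  ring

lemma commute_r_sr_iff' {i j : ZMod n} : Commute (r i) (sr j) ↔ 2 * i = 0 := by
  show r i * sr j = sr j * r i ↔ _
  simp only [r_mul_sr, sr_mul_r, sr.injEq]
  constructor <;> intro h <;> linear_combination -h

lemma commute_sr_sr_iff' {i j : ZMod n} : Commute (sr i) (sr j) ↔ 2 * (j - i) = 0 := by
  show sr i * sr j = sr j * sr i ↔ _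
  simp only [sr_mul_sr, r.injEq]
  constructor <;> intro h <;> linear_combination h

lemma r_mem_center_iff' {i : ZMod n} :
    r i ∈ Subgroup.center (DihedralGroup n) ↔ 2 * i = 0 := by
  rw [Subgroup.mem_center_iff]
  constructor
  · intro h
    have h0 := h (sr 0)
    simp only [sr_mul_r, r_mul_sr, sr.injEq] at h0
    linear_combination h0
  · intro h g
    rcases g with j | j
    · simp only [r_mul_r, r.injEq]; ring
    · simp only [sr_mul_r, r_mul_sr, sr.injEq]
      linear_combination h

lemma sr_not_mem_center' (hn : 3 ≤ n) (i : ZMod n) :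
    sr i ∉ Subgroup.center (DihedralGroup n) := by
  rw [Subgroup.mem_center_iff]
  intro h
  have h1 := h (r 1)
  simp only [r_mul_sr, sr_mul_r, sr.injEq] at h1
  have h2 : ((2 : ℕ) : ZMod n) = 0 := by push_cast; linear_combination -h1
  rw [ZMod.natCast_eq_zero_iff] at h2
  have := Nat.le_of_dvd (by norm_num) h2
  omega

lemma mem_carrier_mk_r {a : ZMod n} {x : DihedralGroup n} :
    x ∈ (ConjClasses.mk (r a)).carrier ↔ x = r a ∨ x = r (-a) := by
  rw [ConjClasses.mem_carrier_iff_mk_eq, ConjClasses.mk_eq_mk_iff_isConj, isConj_comm,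
    isConj_r_iff']

lemma mem_carrier_mk_sr {a : ZMod n} {x : DihedralGroup n} :
    x ∈ (ConjClasses.mk (sr a)).carrier ↔ ∃ t, x = sr (a + 2 * t) := by
  rw [ConjClasses.mem_carrier_iff_mk_eq, ConjClasses.mk_eq_mk_iff_isConj, isConj_comm,
    isConj_sr_iff']

lemma two_mul_natCast_ne {a : ℕ} (h1 : 0 < a) (h2 : 2 * a < n) :
    2 * ((a : ℕ) : ZMod n) ≠ 0 := by
  intro h
  have h' : ((2 * a : ℕ) : ZMod n) = 0 := by push_cast; linear_combination h
  rw [ZMod.natCast_eq_zero_iff] at h'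
  have := Nat.le_of_dvd (by omega) h'
  omega

lemma r_not_center' (hn : 3 ≤ n) {a : ℕ} (h1 : 0 < a) (h2 : 2 * a < n) :
    DihedralGroup.r ((a : ℕ) : ZMod n) ∉ Subgroup.center (DihedralGroup n) := by
  rw [r_mem_center_iff']
  exact two_mul_natCast_ne h1 h2

lemma mk_r_natCast_inj {a b : ℕ} (ha : 0 < a) (hb : 0 < b) (hab : a + b < n)
    (h : ConjClasses.mk (DihedralGroup.r ((a : ℕ) : ZMod n)) = ConjClasses.mk (r ((b : ℕ) : ZMod n))) :
    a = b := by
  haveI : NeZero n := ⟨by omega⟩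
  rw [ConjClasses.mk_eq_mk_iff_isConj, isConj_r_iff'] at h
  rcases h with h | h
  · injection h with h
    have := congrArg ZMod.val h
    rw [ZMod.val_cast_of_lt (by omega), ZMod.val_cast_of_lt (by omega)] at this
    omega
  · injection h with h
    have h' : ((a + b : ℕ) : ZMod n) = 0 := by push_cast; linear_combination h
    rw [ZMod.natCast_eq_zero_iff] at h'
    have := Nat.le_of_dvd (by omega) h'
    omega

lemma sr_zero_ne_sr_one (h2 : 2 ∣ n) :
    ConjClasses.mk (sr (0 : ZMod n)) ≠ ConjClasses.mk (sr (1 : ZMod n)) := by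
  intro h
  rw [ConjClasses.mk_eq_mk_iff_isConj, isConj_sr_iff'] at h
  obtain ⟨t, ht⟩ := h
  injection ht with ht
  have h3 := congrArg (ZMod.castHom h2 (ZMod 2)) ht
  simp only [map_add, map_mul, map_one, map_zero, map_ofNat] at h3
  rw [show (2 : ZMod 2) = 0 from by decide, zero_mul, add_zero] at h3
  exact one_ne_zero h3

lemma eq_zero_or_half (hn0 : 0 < n) {i : ZMod n} (h : 2 * i = 0) :
    i = 0 ∨ i = ((n / 2 : ℕ) : ZMod n) := by
  haveI : NeZero n := ⟨by omega⟩
  have hv : ((2 * i.val : ℕ) : ZMod n) = 0 := by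
    push_cast [ZMod.natCast_zmod_val]
    linear_combination h
  rw [ZMod.natCast_eq_zero_iff] at hv
  obtain ⟨c, hc⟩ := hv
  have hlt : i.val < n := ZMod.val_lt i
  have hc2 : c < 2 := by
    by_contra hcge
    push_neg at hcge
    have : n * 2 ≤ n * c := Nat.mul_le_mul_left n hcge
    omega
  interval_cases c
  · left
    have hv0 : i.val = 0 := by omega
    rw [← ZMod.natCast_zmod_val i, hv0]
    simp
  · right
    have hv0 : i.val = n / 2 := by omega
    rw [← ZMod.natCast_zmod_val i, hv0]

end DihedralGroup

namespace DihedralGroup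

abbrev Vtx (n : ℕ) :=
  {c : ConjClasses (DihedralGroup n) //
    ∃ g : DihedralGroup n, g ∉ Subgroup.center (DihedralGroup n) ∧ ConjClasses.mk g = c}

def rvert (n : ℕ) (hn : 3 ≤ n) (i : Fin ((n - 1) / 2)) : Vtx n :=
  ⟨ConjClasses.mk (r ((i.val + 1 : ℕ) : ZMod n)), r ((i.val + 1 : ℕ) : ZMod n),
    r_not_center' hn (by omega) (by have := i.isLt; omega), rfl⟩

def svert (n : ℕ) (hn : 3 ≤ n) (a : ZMod n) : Vtx n :=
  ⟨ConjClasses.mk (sr a), sr a, sr_not_mem_center' hn a, rfl⟩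

variable {n : ℕ}

lemma rvert_inj (hn : 3 ≤ n) : Function.Injective (rvert n hn) := by
  intro i j h
  have h' := congrArg Subtype.val h
  simp only [rvert] at h'
  have := mk_r_natCast_inj (by omega) (by omega)
    (by have := i.isLt; have := j.isLt; omega) h'
  exact Fin.ext (by omega)

lemma rvert_ne_svert (hn : 3 ≤ n) (i : Fin ((n-1)/2)) (a : ZMod n) :
    rvert n hn i ≠ svert n hn a := by
  intro h
  have h' := congrArg Subtype.val h
  simp only [rvert, svert, ConjClasses.mk_eq_mk_iff_isConj] at h'
  exact not_isConj_r_sr' h'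

lemma adj_rvert_rvert (hn : 3 ≤ n) {i j : Fin ((n-1)/2)} (hne : i ≠ j) :
    (CCC (DihedralGroup n)).Adj (rvert n hn i) (rvert n hn j) := by
  refine ⟨fun h => hne (rvert_inj hn h), r ((i.val + 1 : ℕ) : ZMod n), ?_,
    r ((j.val + 1 : ℕ) : ZMod n), ?_, commute_r_r' _ _⟩
  · exact mem_carrier_mk_r.2 (Or.inl rfl)
  · exact mem_carrier_mk_r.2 (Or.inl rfl)

lemma not_adj_rvert_svert (hn : 3 ≤ n) (i : Fin ((n-1)/2)) (a : ZMod n) :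
    ¬ (CCC (DihedralGroup n)).Adj (rvert n hn i) (svert n hn a) := by
  rintro ⟨-, x, hx, y, hy, hxy⟩
  rw [show (rvert n hn i).1 = ConjClasses.mk (r ((i.val + 1 : ℕ) : ZMod n)) from rfl,
    mem_carrier_mk_r] at hx
  rw [show (svert n hn a).1 = ConjClasses.mk (sr a) from rfl, mem_carrier_mk_sr] at hy
  obtain ⟨t, rfl⟩ := hy
  have hkey : 2 * (((i.val + 1 : ℕ) : ZMod n)) ≠ 0 :=
    two_mul_natCast_ne (by omega) (by have := i.isLt; omega)
  rcases hx with rfl | rfl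
  · rw [commute_r_sr_iff'] at hxy
    exact hkey hxy
  · rw [commute_r_sr_iff'] at hxy
    rw [mul_neg, neg_eq_zero] at hxy
    exact hkey hxy

lemma rvert_surj_aux (hn : 3 ≤ n) {i : ZMod n} (h : 2 * i ≠ 0) :
    ∃ idx : Fin ((n - 1) / 2),
      ConjClasses.mk (r (((idx.val + 1 : ℕ)) : ZMod n)) = ConjClasses.mk (r i) := by
  haveI : NeZero n := ⟨by omega⟩
  set a := i.val with ha
  have hlt : a < n := ZMod.val_lt i
  have hdvd : ¬ (n ∣ 2 * a) := by
    intro hd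
    apply h
    have h' : ((2 * a : ℕ) : ZMod n) = 0 := (ZMod.natCast_eq_zero_iff _ _).2 hd
    push_cast [ha, ZMod.natCast_zmod_val] at h'
    linear_combination h'
  have ha0 : 0 < a := by
    rcases Nat.eq_zero_or_pos a with h0 | h0
    · exact absurd ⟨0, by omega⟩ hdvd
    · exact h0
  have h2an : 2 * a ≠ n := fun hh => hdvd ⟨1, by omega⟩
  have hcast : ((a : ℕ) : ZMod n) = i := by rw [ha]; exact ZMod.natCast_zmod_val i
  by_cases hsmall : a ≤ (n - 1) / 2
  · refine ⟨⟨a - 1, by omega⟩, ?_⟩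
    have : a - 1 + 1 = a := by omega
    rw [this, hcast]
  · push_neg at hsmall
    refine ⟨⟨n - a - 1, by omega⟩, ?_⟩
    have h1 : n - a - 1 + 1 = n - a := by omega
    have h2 : ((n - a : ℕ) : ZMod n) = -i := by
      push_cast [Nat.cast_sub (le_of_lt hlt), ZMod.natCast_self, hcast]
      ring
    rw [h1, h2, ConjClasses.mk_eq_mk_iff_isConj, isConj_r_iff']
    right
    rw [neg_neg]

end DihedralGroup

namespace DihedralGroup

lemma mk_sr_odd (hn : 3 ≤ n) (hodd : Odd n) (i : ZMod n) :
    ConjClasses.mk (sr (0 : ZMod n)) = ConjClasses.mk (sr i) := by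
  rw [ConjClasses.mk_eq_mk_iff_isConj, isConj_sr_iff']
  refine ⟨(((n + 1) / 2 : ℕ) : ZMod n) * i, ?_⟩
  congr 1
  have h3 : (2 : ZMod n) * (((n + 1) / 2 : ℕ) : ZMod n) = 1 := by
    have h1 : ((2 * ((n + 1) / 2) : ℕ) : ZMod n) = ((n + 1 : ℕ) : ZMod n) := by
      congr 1
      obtain ⟨m, hm⟩ := hodd
      omega
    push_cast [ZMod.natCast_self] at h1
    linear_combination h1
  linear_combination (-i) * h3

lemma mk_sr_even_even (hn : 3 ≤ n) {i : ZMod n} (he : Even i.val) :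
    ConjClasses.mk (sr (0 : ZMod n)) = ConjClasses.mk (sr i) := by
  haveI : NeZero n := ⟨by omega⟩
  rw [ConjClasses.mk_eq_mk_iff_isConj, isConj_sr_iff']
  refine ⟨((i.val / 2 : ℕ) : ZMod n), ?_⟩
  congr 1
  have h1 : ((2 * (i.val / 2) : ℕ) : ZMod n) = ((i.val : ℕ) : ZMod n) := by
    congr 1
    obtain ⟨t, ht⟩ := he
    omega
  rw [ZMod.natCast_zmod_val] at h1
  push_cast at h1
  linear_combination -h1

lemma mk_sr_even_odd (hn : 3 ≤ n) {i : ZMod n} (ho : Odd i.val) :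
    ConjClasses.mk (sr (1 : ZMod n)) = ConjClasses.mk (sr i) := by
  haveI : NeZero n := ⟨by omega⟩
  rw [ConjClasses.mk_eq_mk_iff_isConj, isConj_sr_iff']
  refine ⟨(((i.val - 1) / 2 : ℕ) : ZMod n), ?_⟩
  congr 1
  have h1 : ((1 + 2 * ((i.val - 1) / 2) : ℕ) : ZMod n) = ((i.val : ℕ) : ZMod n) := by
    congr 1
    obtain ⟨t, ht⟩ := ho
    omega
  rw [ZMod.natCast_zmod_val] at h1
  push_cast at h1
  linear_combination -h1

lemma not_adj_svert_01 (hn : 3 ≤ n) (h2 : 2 ∣ n) (hhalf : Even (n / 2)) :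
    ¬ (CCC (DihedralGroup n)).Adj (svert n hn 0) (svert n hn 1) := by
  rintro ⟨-, x, hx, y, hy, hxy⟩
  rw [show (svert n hn 0).1 = ConjClasses.mk (sr 0) from rfl, mem_carrier_mk_sr] at hx
  rw [show (svert n hn 1).1 = ConjClasses.mk (sr 1) from rfl, mem_carrier_mk_sr] at hy
  obtain ⟨s, rfl⟩ := hx
  obtain ⟨t, rfl⟩ := hy
  rw [commute_sr_sr_iff'] at hxy
  rcases eq_zero_or_half (by omega) hxy with h0 | h0 <;>
    have h3 := congrArg (ZMod.castHom h2 (ZMod 2)) h0 <;>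
    simp only [map_sub, map_add, map_mul, map_zero, map_one, map_ofNat, map_natCast] at h3 <;>
    rw [show (2 : ZMod 2) = 0 from by decide] at h3
  · simp at h3
  · have hz : ((n / 2 : ℕ) : ZMod 2) = 0 := by
      rw [ZMod.natCast_eq_zero_iff]
      exact hhalf.two_dvd
    rw [hz] at h3
    simp at h3

lemma adj_svert_01 (hn : 3 ≤ n) (h2 : 2 ∣ n) (hhalf : Odd (n / 2)) :
    (CCC (DihedralGroup n)).Adj (svert n hn 0) (svert n hn 1) := by
  refine ⟨fun h => sr_zero_ne_sr_one h2 (congrArg Subtype.val h),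
    sr ((n / 2 + 1 : ℕ) : ZMod n), ?_, sr 1, ?_, ?_⟩
  · rw [show (svert n hn 0).1 = ConjClasses.mk (sr 0) from rfl, mem_carrier_mk_sr]
    refine ⟨(((n / 2 + 1) / 2 : ℕ) : ZMod n), ?_⟩
    congr 1
    have h1 : ((2 * ((n / 2 + 1) / 2) : ℕ) : ZMod n) = ((n / 2 + 1 : ℕ) : ZMod n) := by
      congr 1
      obtain ⟨t, ht⟩ := hhalf
      omega
    push_cast at h1 ⊢
    linear_combination -h1
  · rw [show (svert n hn 1).1 = ConjClasses.mk (sr 1) from rfl, mem_carrier_mk_sr]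
    exact ⟨0, by norm_num⟩
  · rw [commute_sr_sr_iff']
    have h1 : ((2 * (n / 2 + 1) : ℕ) : ZMod n) = ((n + 2 : ℕ) : ZMod n) := by
      congr 1
      omega
    push_cast [ZMod.natCast_self] at h1 ⊢
    linear_combination -h1

end DihedralGroup

namespace DihedralGroup

def oddFun (hn : 3 ≤ n) : Fin ((n - 1) / 2) ⊕ Fin 1 → Vtx n :=
  Sum.elim (rvert n hn) fun _ => svert n hn 0

lemma oddFun_bij (hn : 3 ≤ n) (hodd : Odd n) : Function.Bijective (oddFun hn) := by
  constructor
  · rintro (i | i) (j | j) h <;> simp only [oddFun, Sum.elim_inl, Sum.elim_inr] at h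
    · exact congrArg Sum.inl (rvert_inj hn h)
    · exact absurd h (rvert_ne_svert hn i _)
    · exact absurd h.symm (rvert_ne_svert hn j _)
    · exact congrArg Sum.inr (Subsingleton.elim i j)
  · rintro ⟨c, g, hg, rfl⟩
    rcases g with i | i
    · have h2i : 2 * i ≠ 0 := fun hh => hg (r_mem_center_iff'.2 hh)
      obtain ⟨idx, hidx⟩ := rvert_surj_aux hn h2i
      exact ⟨Sum.inl idx, Subtype.ext hidx⟩
    · exact ⟨Sum.inr 0, Subtype.ext (mk_sr_odd hn hodd i)⟩

lemma exists_iso_odd (hn : 3 ≤ n) (hodd : Odd n) :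
    Nonempty (((⊤ : SimpleGraph (Fin ((n - 1) / 2))) ⊕g (⊥ : SimpleGraph (Fin 1)))
      ≃g CCC (DihedralGroup n)) := by
  refine ⟨⟨Equiv.ofBijective _ (oddFun_bij hn hodd), ?_⟩⟩
  rintro (i | i) (j | j) <;>
    simp only [Equiv.ofBijective_apply, oddFun, Sum.elim_inl, Sum.elim_inr]
  · constructor
    · intro h
      intro hij
      exact h.1 (by rw [hij])
    · intro hij
      exact adj_rvert_rvert hn hij
  · constructor
    · intro h
      exact absurd h (not_adj_rvert_svert hn i _)
    · intro h
      simp [SimpleGraph.sum_adj] at h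
  · constructor
    · intro h
      exact absurd h.symm (not_adj_rvert_svert hn j _)
    · intro h
      simp [SimpleGraph.sum_adj] at h
  · constructor
    · intro h
      exact absurd rfl h.1
    · intro h
      simp [SimpleGraph.sum_adj] at h

def evenFun (hn : 3 ≤ n) : Fin ((n - 1) / 2) ⊕ Fin 2 → Vtx n :=
  Sum.elim (rvert n hn) fun j => svert n hn ((j.val : ℕ) : ZMod n)

lemma evenFun_bij (hn : 3 ≤ n) (h2 : 2 ∣ n) : Function.Bijective (evenFun hn) := by
  constructor
  · rintro (i | i) (j | j) h <;> simp only [evenFun, Sum.elim_inl, Sum.elim_inr] at h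
    · exact congrArg Sum.inl (rvert_inj hn h)
    · exact absurd h (rvert_ne_svert hn i _)
    · exact absurd h.symm (rvert_ne_svert hn j _)
    · have h' := congrArg Subtype.val h
      simp only [svert] at h'
      fin_cases i <;> fin_cases j <;> first
        | rfl
        | (exact absurd (by simpa using h') (sr_zero_ne_sr_one h2))
        | (exact absurd (by simpa using h'.symm) (sr_zero_ne_sr_one h2))
  · rintro ⟨c, g, hg, rfl⟩
    rcases g with i | i
    · have h2i : 2 * i ≠ 0 := fun hh => hg (r_mem_center_iff'.2 hh)
      obtain ⟨idx, hidx⟩ := rvert_surj_aux hn h2i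
      exact ⟨Sum.inl idx, Subtype.ext hidx⟩
    · rcases Nat.even_or_odd i.val with he | ho
      · refine ⟨Sum.inr 0, Subtype.ext ?_⟩
        simpa [evenFun, svert] using mk_sr_even_even hn he
      · refine ⟨Sum.inr 1, Subtype.ext ?_⟩
        simpa [evenFun, svert] using mk_sr_even_odd hn ho

lemma exists_iso_even_even (hn : 3 ≤ n) (h2 : 2 ∣ n) (hhalf : Even (n / 2)) :
    Nonempty (((⊤ : SimpleGraph (Fin ((n - 1) / 2))) ⊕g (⊥ : SimpleGraph (Fin 2)))
      ≃g CCC (DihedralGroup n)) := by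
  refine ⟨⟨Equiv.ofBijective _ (evenFun_bij hn h2), ?_⟩⟩
  rintro (i | i) (j | j) <;>
    simp only [Equiv.ofBijective_apply, evenFun, Sum.elim_inl, Sum.elim_inr]
  · exact ⟨fun h hij => h.1 (by rw [hij]), fun hij => adj_rvert_rvert hn hij⟩
  · exact ⟨fun h => absurd h (not_adj_rvert_svert hn i _),
      fun h => by simp [SimpleGraph.sum_adj] at h⟩
  · exact ⟨fun h => absurd h.symm (not_adj_rvert_svert hn j _),
      fun h => by simp [SimpleGraph.sum_adj] at h⟩
  · refine ⟨fun h => ?_, fun h => by simp [SimpleGraph.sum_adj] at h⟩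
    fin_cases i <;> fin_cases j
    · exact absurd rfl h.1
    · exact absurd (by simpa using h) (not_adj_svert_01 hn h2 hhalf)
    · exact absurd (by simpa using h.symm) (not_adj_svert_01 hn h2 hhalf)
    · exact absurd rfl h.1

lemma exists_iso_even_odd (hn : 3 ≤ n) (h2 : 2 ∣ n) (hhalf : Odd (n / 2)) :
    Nonempty (((⊤ : SimpleGraph (Fin ((n - 1) / 2))) ⊕g (⊤ : SimpleGraph (Fin 2)))
      ≃g CCC (DihedralGroup n)) := by
  refine ⟨⟨Equiv.ofBijective _ (evenFun_bij hn h2), ?_⟩⟩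
  rintro (i | i) (j | j) <;>
    simp only [Equiv.ofBijective_apply, evenFun, Sum.elim_inl, Sum.elim_inr]
  · exact ⟨fun h hij => h.1 (by rw [hij]), fun hij => adj_rvert_rvert hn hij⟩
  · exact ⟨fun h => absurd h (not_adj_rvert_svert hn i _),
      fun h => by simp [SimpleGraph.sum_adj] at h⟩
  · exact ⟨fun h => absurd h.symm (not_adj_rvert_svert hn j _),
      fun h => by simp [SimpleGraph.sum_adj] at h⟩
  · constructor
    · intro h
      intro hij
      exact h.1 (by rw [hij])
    · intro hij
      fin_cases i <;> fin_cases j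
      · exact absurd rfl hij
      · simpa using adj_svert_01 hn h2 hhalf
      · simpa using (adj_svert_01 hn h2 hhalf).symm
      · exact absurd rfl hij

end DihedralGroup


/-- Energy of the commuting conjugacy class graph of the dihedral group `D_{2n}`. -/
theorem energy_CCC_dihedral (n : ℕ) (hn : 3 ≤ n) :
    (Odd n → graphEnergy (CCC (DihedralGroup n)) = (n : ℝ) - 3) ∧
    (Even n → Even (n / 2) → graphEnergy (CCC (DihedralGroup n)) = (n : ℝ) - 4) ∧
    (Even n → Odd (n / 2) → graphEnergy (CCC (DihedralGroup n)) = (n : ℝ) - 2) := by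
  haveI : NeZero n := ⟨by omega⟩
  haveI : Fintype (DihedralGroup.Vtx n) := Fintype.ofFinite _
  refine ⟨?_, ?_, ?_⟩
  · intro hodd
    obtain ⟨e⟩ := DihedralGroup.exists_iso_odd hn hodd
    rw [← graphEnergy_congr e, graphEnergy_topbot _ _ (by omega)]
    have h2 : ((n - 1) / 2 * 2 : ℕ) = n - 1 := by
      obtain ⟨m, hm⟩ := hodd; omega
    have h3 : (((n - 1) / 2 : ℕ) : ℝ) = ((n : ℝ) - 1) / 2 := by
      have h4 := congrArg (fun x : ℕ => (x : ℝ)) h2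
      push_cast [Nat.cast_sub (by omega : 1 ≤ n)] at h4
      linarith
    rw [h3]; ring
  · intro he hh
    obtain ⟨e⟩ := DihedralGroup.exists_iso_even_even hn he.two_dvd hh
    rw [← graphEnergy_congr e, graphEnergy_topbot _ _ (by omega)]
    have h2 : ((n - 1) / 2 * 2 : ℕ) = n - 2 := by
      obtain ⟨m, hm⟩ := he; omega
    have h3 : (((n - 1) / 2 : ℕ) : ℝ) = ((n : ℝ) - 2) / 2 := by
      have h4 := congrArg (fun x : ℕ => (x : ℝ)) h2
      push_cast [Nat.cast_sub (by omega : 2 ≤ n)] at h4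
      linarith
    rw [h3]; ring
  · intro he hh
    obtain ⟨e⟩ := DihedralGroup.exists_iso_even_odd hn he.two_dvd hh
    rw [← graphEnergy_congr e, graphEnergy_toptop _ (by omega)]
    have h2 : ((n - 1) / 2 * 2 : ℕ) = n - 2 := by
      obtain ⟨m, hm⟩ := he; omega
    have h3 : (((n - 1) / 2 : ℕ) : ℝ) = ((n : ℝ) - 2) / 2 := by
      have h4 := congrArg (fun x : ℕ => (x : ℝ)) h2
      push_cast [Nat.cast_sub (by omega : 2 ≤ n)] at h4
      linarith
    rw [h3]; ring

end
end

section
/- Let m ≥ 2 and let G = Q_{4m} be the dicyclic group of order 4m. Then the energy of the commuting conjugacy class graph satisfies: E(CCC(G)) = 2m − 2 if m is odd, and E(CCC(G)) = 2m − 4 if m is even. -/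
noncomputable section

open scoped Classical

set_option linter.dupNamespace false
namespace QCCC
open QuaternionGroup Polynomial

variable {m : ℕ}

lemma inv_a (i : ZMod (2*m)) : (a i : QuaternionGroup m)⁻¹ = a (-i) :=
  inv_eq_of_mul_eq_one_right (by rw [a_mul_a, add_neg_cancel, ← one_def])

lemma h2m : ((m : ZMod (2*m)) + (m : ZMod (2*m))) = 0 := by
  have : ((2*m : ℕ) : ZMod (2*m)) = 0 := ZMod.natCast_self _
  push_cast at this
  linear_combination this

lemma inv_xa (i : ZMod (2*m)) : (xa i : QuaternionGroup m)⁻¹ = xa ((m : ZMod (2*m)) + i) :=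
  inv_eq_of_mul_eq_one_right (by
    rw [xa_mul_xa]
    rw [show ((m : ZMod (2*m)) + ((m : ZMod (2*m)) + i) - i) = 0 by linear_combination (h2m (m := m))]
    rw [← one_def])

lemma isConj_a_iff (i : ZMod (2*m)) (g : QuaternionGroup m) :
    IsConj (a i) g ↔ g = a i ∨ g = a (-i) := by
  constructor
  · rw [isConj_iff]
    rintro ⟨(j|j), rfl⟩
    · left
      rw [inv_a, a_mul_a, a_mul_a]
      congr 1; ring
    · right
      rw [inv_xa, xa_mul_a, xa_mul_xa]
      congr 1; linear_combination (h2m (m := m))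
  · rintro (rfl|rfl)
    · exact IsConj.refl _
    · rw [isConj_iff]
      refine ⟨xa 0, ?_⟩
      rw [inv_xa, xa_mul_a, xa_mul_xa]
      congr 1; linear_combination (h2m (m := m))

lemma isConj_xa_iff (i : ZMod (2*m)) (g : QuaternionGroup m) :
    IsConj (xa i) g ↔ ∃ k, g = xa (i + 2*k) := by
  constructor
  · rw [isConj_iff]
    rintro ⟨(j|j), rfl⟩
    · refine ⟨-j, ?_⟩
      rw [inv_a, a_mul_xa, xa_mul_a]
      congr 1; ring
    · refine ⟨j - i, ?_⟩
      rw [inv_xa, xa_mul_xa, a_mul_xa]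
      congr 1; ring
  · rintro ⟨k, rfl⟩
    rw [isConj_iff]
    refine ⟨a (-k), ?_⟩
    rw [inv_a, a_mul_xa, xa_mul_a]
    congr 1; ring

lemma a_mem_center_iff (i : ZMod (2*m)) :
    a i ∈ Subgroup.center (QuaternionGroup m) ↔ 2*i = 0 := by
  rw [Subgroup.mem_center_iff]
  constructor
  · intro h
    have h0 := h (xa 0)
    rw [xa_mul_a, a_mul_xa] at h0
    rw [xa.injEq] at h0
    linear_combination h0
  · intro h g
    rcases g with j | j
    · rw [a_mul_a, a_mul_a]; congr 1; ring
    · rw [xa_mul_a, a_mul_xa]; congr 1; linear_combination h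

lemma two_ne_zero' (hm : 2 ≤ m) : (2 : ZMod (2*m)) ≠ 0 := by
  haveI : NeZero (2*m) := ⟨by omega⟩
  intro h
  have h2 : ((2 : ℕ) : ZMod (2*m)) = 0 := by push_cast; exact h
  rw [ZMod.natCast_eq_zero_iff] at h2
  have := Nat.le_of_dvd (by norm_num) h2
  omega

lemma xa_not_mem_center (hm : 2 ≤ m) (i : ZMod (2*m)) :
    xa i ∉ Subgroup.center (QuaternionGroup m) := by
  rw [Subgroup.mem_center_iff]
  intro h
  have h1 := h (a 1)
  rw [a_mul_xa, xa_mul_a, xa.injEq] at h1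
  exact two_ne_zero' hm (by linear_combination -h1)

lemma two_mul_eq_zero_iff (hm : 2 ≤ m) (x : ZMod (2*m)) :
    2 * x = 0 ↔ x = 0 ∨ x = (m : ZMod (2*m)) := by
  haveI : NeZero (2*m) := ⟨by omega⟩
  constructor
  · intro h
    have hx : ((2 * x.val : ℕ) : ZMod (2*m)) = 0 := by
      push_cast [ZMod.natCast_zmod_val]; exact h
    rw [ZMod.natCast_eq_zero_iff] at hx
    obtain ⟨c, hc⟩ := hx
    have hv := x.val_lt
    rw [mul_assoc] at hc
    have hc' : x.val = m * c := Nat.eq_of_mul_eq_mul_left two_pos hc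
    have : c = 0 ∨ c = 1 := by
      rcases Nat.lt_or_ge c 2 with h' | h'
      · omega
      · exfalso; nlinarith [hc', hv]
    rcases this with rfl | rfl
    · left
      rw [← ZMod.natCast_zmod_val x, hc']
      simp
    · right
      rw [← ZMod.natCast_zmod_val x, hc']
      simp
  · rintro (rfl | rfl)
    · ring
    · linear_combination (h2m (m := m))

/-- the parity homomorphism -/
def φ : ZMod (2*m) →+* ZMod 2 := ZMod.castHom ⟨m, rfl⟩ (ZMod 2)

lemma phi_natCast (k : ℕ) : φ (m := m) (k : ZMod (2*m)) = (k : ZMod 2) := map_natCast _ _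

lemma phi_two_mul (k : ZMod (2*m)) : φ (2*k) = 0 := by
  rw [map_mul]
  have : φ (m := m) 2 = 0 := by
    have := phi_natCast (m := m) 2
    push_cast at this
    rw [this]; decide
  rw [this, zero_mul]

lemma exists_eq_add_two_mul (hm : 2 ≤ m) {i j : ZMod (2*m)} (h : φ i = φ j) :
    ∃ k, j = i + 2*k := by
  haveI : NeZero (2*m) := ⟨by omega⟩
  have hd : φ (j - i) = 0 := by rw [map_sub, h, sub_self]
  have hval : ((j - i).val : ZMod 2) = 0 := by
    rw [← phi_natCast (m := m), ZMod.natCast_zmod_val]; exact hd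
  rw [ZMod.natCast_eq_zero_iff] at hval
  obtain ⟨t, ht⟩ := hval
  refine ⟨(t : ZMod (2*m)), ?_⟩
  have : ((j - i).val : ZMod (2*m)) = j - i := ZMod.natCast_zmod_val _
  rw [ht] at this
  push_cast at this
  linear_combination -this

end QCCC

namespace QCCC
open QuaternionGroup Polynomial

variable (m : ℕ)

/-- vertex set of `CCC (QuaternionGroup m)` -/
abbrev S := {c : ConjClasses (QuaternionGroup m) //
    ∃ g : QuaternionGroup m, g ∉ Subgroup.center (QuaternionGroup m) ∧ ConjClasses.mk g = c}

variable {m}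

lemma a_not_center (hm : 2 ≤ m) {k : ℕ} (h1 : 1 ≤ k) (h2 : k < 2*m) (hne : k ≠ m) :
    (a (k : ZMod (2*m)) : QuaternionGroup m) ∉ Subgroup.center (QuaternionGroup m) := by
  haveI : NeZero (2*m) := ⟨by omega⟩
  rw [a_mem_center_iff, two_mul_eq_zero_iff hm]
  rintro (h | h)
  · have := congrArg ZMod.val h
    rw [ZMod.val_cast_of_lt h2, ZMod.val_zero] at this
    omega
  · have := congrArg ZMod.val h
    rw [ZMod.val_cast_of_lt h2, ZMod.val_cast_of_lt (by omega : m < 2*m)] at this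
    omega

variable (m) in
/-- enumeration of the vertices -/
def f (hm : 2 ≤ m) : Fin (m-1) ⊕ Fin 2 → S m
  | Sum.inl i => ⟨ConjClasses.mk (a (((i : ℕ) + 1 : ℕ) : ZMod (2*m))),
      a (((i : ℕ) + 1 : ℕ) : ZMod (2*m)),
      a_not_center hm (by omega) (by have := i.2; omega) (by have := i.2; omega), rfl⟩
  | Sum.inr p => ⟨ConjClasses.mk (xa (((p : ℕ) : ℕ) : ZMod (2*m))),
      xa _, xa_not_mem_center hm _, rfl⟩

lemma natCast_inj_of_lt {k l : ℕ} (hk : k < 2*m) (hl : l < 2*m) [NeZero (2*m)]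
    (h : (k : ZMod (2*m)) = (l : ZMod (2*m))) : k = l := by
  have := congrArg ZMod.val h
  rwa [ZMod.val_cast_of_lt hk, ZMod.val_cast_of_lt hl] at this

lemma f_inj (hm : 2 ≤ m) : Function.Injective (f m hm) := by
  haveI : NeZero (2*m) := ⟨by omega⟩
  rintro (i|p) (j|q) h <;>
    simp only [f, Subtype.mk.injEq, ConjClasses.mk_eq_mk_iff_isConj] at h
  · rw [isConj_a_iff] at h
    rcases h with h | h
    · rw [a.injEq] at h
      have := natCast_inj_of_lt (by have := j.2; omega) (by have := i.2; omega) h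
      have : (i : ℕ) = (j : ℕ) := by omega
      exact congrArg Sum.inl (Fin.ext this)
    · rw [a.injEq, eq_neg_iff_add_eq_zero, ← Nat.cast_add] at h
      rw [ZMod.natCast_eq_zero_iff] at h
      have := Nat.le_of_dvd (by omega) h
      have hi := i.2; have hj := j.2
      omega
  · rw [isConj_a_iff] at h
    rcases h with h | h <;> simp at h
  · rw [isConj_xa_iff] at h
    obtain ⟨k, hk⟩ := h
    simp at hk
  · rw [isConj_xa_iff] at h
    obtain ⟨k, hk⟩ := h
    rw [xa.injEq] at hk
    have hφ := congrArg (φ (m := m)) hk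
    rw [map_add, phi_two_mul, add_zero, phi_natCast, phi_natCast] at hφ
    congr 1
    fin_cases p <;> fin_cases q <;> first | rfl | simp_all

lemma f_surj (hm : 2 ≤ m) : Function.Surjective (f m hm) := by
  haveI : NeZero (2*m) := ⟨by omega⟩
  rintro ⟨c, g, hg, rfl⟩
  rcases g with i | i
  · rw [a_mem_center_iff, two_mul_eq_zero_iff hm] at hg
    push_neg at hg
    obtain ⟨h0, hmm⟩ := hg
    set v := i.val with hv
    have hv2 : v < 2*m := i.val_lt
    have hv0 : v ≠ 0 := fun h => h0 (by rw [← ZMod.natCast_zmod_val i, ← hv, h, Nat.cast_zero])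
    have hvm : v ≠ m := fun h => hmm (by rw [← ZMod.natCast_zmod_val i, ← hv, h])
    have hcast : ((v : ℕ) : ZMod (2*m)) = i := ZMod.natCast_zmod_val i
    rcases Nat.lt_or_ge v m with hlt | hge
    · refine ⟨Sum.inl ⟨v - 1, by omega⟩, ?_⟩
      simp only [f]
      apply Subtype.ext
      simp only
      congr 2
      rw [← hcast]
      congr 1
      omega
    · refine ⟨Sum.inl ⟨2*m - v - 1, by omega⟩, ?_⟩
      simp only [f]
      apply Subtype.ext
      simp only
      rw [ConjClasses.mk_eq_mk_iff_isConj, isConj_a_iff]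
      right
      rw [a.injEq, show (2*m - v - 1 + 1 : ℕ) = 2*m - v by omega,
        eq_comm, neg_eq_iff_add_eq_zero, ← hcast, ← Nat.cast_add,
        show (2*m - v + v : ℕ) = 2*m by omega]
      exact ZMod.natCast_self _
  · -- xa case
    have : φ i = 0 ∨ φ i = 1 := by
      rcases (show ∀ x : ZMod 2, x = 0 ∨ x = 1 by decide) (φ i) with h | h
      · exact Or.inl h
      · exact Or.inr h
    rcases this with h | h
    · refine ⟨Sum.inr 0, ?_⟩
      apply Subtype.ext
      simp only [f]
      rw [ConjClasses.mk_eq_mk_iff_isConj, isConj_xa_iff]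
      obtain ⟨k, hk⟩ := exists_eq_add_two_mul hm
        (show φ ((((0:Fin 2) : ℕ) : ℕ) : ZMod (2*m)) = φ i by
          rw [phi_natCast]; simpa using h.symm)
      exact ⟨k, by rw [hk]⟩
    · refine ⟨Sum.inr 1, ?_⟩
      apply Subtype.ext
      simp only [f]
      rw [ConjClasses.mk_eq_mk_iff_isConj, isConj_xa_iff]
      obtain ⟨k, hk⟩ := exists_eq_add_two_mul hm
        (show φ ((((1:Fin 2) : ℕ) : ℕ) : ZMod (2*m)) = φ i by
          rw [phi_natCast]; simpa using h.symm)
      exact ⟨k, by rw [hk]⟩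

end QCCC

namespace QCCC
open QuaternionGroup Polynomial

/-- adjacency matrix of the complete graph -/
def Kmat (n : ℕ) : Matrix (Fin n) (Fin n) ℝ := Matrix.of fun i j => if i = j then 0 else 1

/-- the 2×2 block -/
def Bmat (m : ℕ) : Matrix (Fin 2) (Fin 2) ℝ := Matrix.of fun i j => if i ≠ j ∧ Odd m then 1 else 0

/-- the model matrix -/
def Mmat (m : ℕ) : Matrix (Fin (m-1) ⊕ Fin 2) (Fin (m-1) ⊕ Fin 2) ℝ :=
  Matrix.fromBlocks (Kmat (m-1)) 0 0 (Bmat m)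

open Polynomial in
lemma eval_charpoly' {n : Type*} [Fintype n] [DecidableEq n] (M : Matrix n n ℝ) (t : ℝ) :
    M.charpoly.eval t = (t • (1 : Matrix n n ℝ) - M).det := by
  rw [Matrix.charpoly]
  have h := RingHom.map_det (Polynomial.evalRingHom t) (Matrix.charmatrix M)
  simp only [Polynomial.coe_evalRingHom] at h
  rw [h]
  congr 1
  ext i j
  by_cases hij : i = j
  · subst hij
    simp [Matrix.charmatrix_apply_eq, Matrix.map_apply, Matrix.sub_apply, Matrix.smul_apply,
      Matrix.one_apply]
  · simp [Matrix.charmatrix_apply_ne _ _ _ hij, Matrix.map_apply, Matrix.sub_apply,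
      Matrix.smul_apply, Matrix.one_apply, hij]

open Polynomial in
lemma charpoly_Kmat (n : ℕ) (hn : 1 ≤ n) :
    (Kmat n).charpoly = (X + 1)^(n-1) * (X - C ((n:ℝ) - 1)) := by
  obtain ⟨k, rfl⟩ : ∃ k, n = k + 1 := ⟨n - 1, by omega⟩
  apply Polynomial.eq_of_infinite_eval_eq
  apply Set.Infinite.mono (s := ({-1}ᶜ : Set ℝ))
  · intro t ht
    have ht' : t + 1 ≠ 0 := by
      intro h
      exact ht (by rw [Set.mem_singleton_iff]; linarith)
    simp only [Set.mem_setOf_eq]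
    rw [eval_charpoly']
    have hfact : t • (1 : Matrix (Fin (k+1)) (Fin (k+1)) ℝ) - Kmat (k+1)
        = (t+1) • (1 + Matrix.replicateCol Unit (fun _ => -(t+1)⁻¹) * Matrix.replicateRow Unit (fun _ => (1:ℝ))) := by
      ext i j
      by_cases hij : i = j <;>
        · simp [Kmat, hij, Matrix.add_apply, Matrix.smul_apply, Matrix.one_apply,
            Matrix.mul_apply, Matrix.replicateCol, Matrix.replicateRow, Matrix.sub_apply]
          field_simp <;> ring
    rw [hfact, Matrix.det_smul, Matrix.det_one_add_replicateCol_mul_replicateRow]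
    simp only [dotProduct, Finset.sum_const, Finset.card_univ, Fintype.card_fin,
      nsmul_eq_mul, eval_mul, eval_pow, eval_add, eval_X, eval_one, eval_sub, eval_C,
      Nat.add_sub_cancel]
    push_cast
    field_simp
    ring
  · apply Set.Finite.infinite_compl
    exact Set.finite_singleton _

open Polynomial in
lemma charpoly_Bmat (m : ℕ) :
    (Bmat m).charpoly
      = if Odd m then (X - C (1:ℝ)) * (X - C (-1:ℝ)) else (X - C (0:ℝ))^2 := by
  rw [Matrix.charpoly, Matrix.det_fin_two,
    Matrix.charmatrix_apply_eq, Matrix.charmatrix_apply_eq,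
    Matrix.charmatrix_apply_ne _ _ _ (by decide : (0 : Fin 2) ≠ 1),
    Matrix.charmatrix_apply_ne _ _ _ (by decide : (1 : Fin 2) ≠ 0)]
  by_cases h : Odd m <;>
    · simp [Bmat, h, map_neg, map_one, map_zero]
      ring

end QCCC

namespace QCCC
open QuaternionGroup Polynomial

open QuaternionGroup

variable {m : ℕ}

lemma natCast_zmod_two_eq_one_iff (k : ℕ) : ((k : ℕ) : ZMod 2) = 1 ↔ Odd k := by
  rw [← ZMod.natCast_mod k 2, Nat.odd_iff]
  rcases (show k % 2 = 0 ∨ k % 2 = 1 by omega) with h | h <;>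
    rw [h] <;> simp <;> decide

lemma two_mul_coe_ne_zero (hm : 2 ≤ m) (i : Fin (m-1)) :
    2 * ((((i:ℕ)+1 : ℕ)) : ZMod (2*m)) ≠ 0 := by
  intro h
  exact a_not_center hm (by omega) (by have := i.2; omega) (by have := i.2; omega)
    ((a_mem_center_iff _).mpr h)

lemma commute_a_xa {s r : ZMod (2*m)} (h : Commute (a s : QuaternionGroup m) (xa r)) :
    2 * s = 0 := by
  have h' := h.eq
  rw [a_mul_xa, xa_mul_a, xa.injEq] at h'
  linear_combination -h'

lemma mem_carrier_f_inl (hm : 2 ≤ m) (i : Fin (m-1)) (x : QuaternionGroup m) :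
    x ∈ ConjClasses.carrier (f m hm (Sum.inl i)).1 ↔
      x = a ((((i:ℕ)+1 : ℕ)) : ZMod (2*m)) ∨ x = a (-((((i:ℕ)+1 : ℕ)) : ZMod (2*m))) := by
  rw [show (f m hm (Sum.inl i)).1
      = ConjClasses.mk (a ((((i:ℕ)+1 : ℕ)) : ZMod (2*m))) from rfl,
    ConjClasses.mem_carrier_iff_mk_eq, ConjClasses.mk_eq_mk_iff_isConj, isConj_comm,
    isConj_a_iff]

lemma mem_carrier_f_inr (hm : 2 ≤ m) (p : Fin 2) (x : QuaternionGroup m) :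
    x ∈ ConjClasses.carrier (f m hm (Sum.inr p)).1 ↔
      ∃ k, x = xa ((((p:ℕ)) : ZMod (2*m)) + 2*k) := by
  rw [show (f m hm (Sum.inr p)).1
      = ConjClasses.mk (xa ((((p:ℕ)) : ZMod (2*m)))) from rfl,
    ConjClasses.mem_carrier_iff_mk_eq, ConjClasses.mk_eq_mk_iff_isConj, isConj_comm,
    isConj_xa_iff]

lemma adjMat_entry (hm : 2 ≤ m) (p q : Fin (m-1) ⊕ Fin 2) :
    adjMat (CCC (QuaternionGroup m)) (f m hm p) (f m hm q) = Mmat m p q := by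
  haveI : NeZero (2*m) := ⟨by omega⟩
  rcases p with i | p <;> rcases q with j | q
  · by_cases hij : i = j
    · subst hij
      have : ¬ (CCC (QuaternionGroup m)).Adj (f m hm (Sum.inl i)) (f m hm (Sum.inl i)) :=
        (CCC (QuaternionGroup m)).irrefl
      simp [adjMat, this, Mmat, Kmat]
    · have hne : f m hm (Sum.inl i) ≠ f m hm (Sum.inl j) := fun h => hij (Sum.inl.inj (f_inj hm h))
      have hadj : (CCC (QuaternionGroup m)).Adj (f m hm (Sum.inl i)) (f m hm (Sum.inl j)) := by
        refine ⟨hne, a ((((i:ℕ)+1 : ℕ)) : ZMod (2*m)), ?_, a ((((j:ℕ)+1 : ℕ)) : ZMod (2*m)), ?_, ?_⟩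
        · rw [mem_carrier_f_inl hm]; left; rfl
        · rw [mem_carrier_f_inl hm]; left; rfl
        · show _ * _ = _ * _
          rw [a_mul_a, a_mul_a, add_comm]
      simp [adjMat, hadj, Mmat, Kmat, hij]
  · have hnadj : ¬ (CCC (QuaternionGroup m)).Adj (f m hm (Sum.inl i)) (f m hm (Sum.inr q)) := by
      rintro ⟨-, x, hx, y, hy, hxy⟩
      rw [mem_carrier_f_inl hm] at hx
      rw [mem_carrier_f_inr hm] at hy
      obtain ⟨k, rfl⟩ := hy
      rcases hx with rfl | rfl
      · exact two_mul_coe_ne_zero hm i (commute_a_xa hxy)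
      · apply two_mul_coe_ne_zero hm i
        have := commute_a_xa hxy
        linear_combination -this
    simp [adjMat, hnadj, Mmat]
  · have hnadj : ¬ (CCC (QuaternionGroup m)).Adj (f m hm (Sum.inr p)) (f m hm (Sum.inl j)) := by
      rintro ⟨-, x, hx, y, hy, hxy⟩
      rw [mem_carrier_f_inr hm] at hx
      rw [mem_carrier_f_inl hm] at hy
      obtain ⟨k, rfl⟩ := hx
      rcases hy with rfl | rfl
      · exact two_mul_coe_ne_zero hm j (commute_a_xa hxy.symm)
      · apply two_mul_coe_ne_zero hm j
        have := commute_a_xa hxy.symm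
        linear_combination -this
    simp [adjMat, hnadj, Mmat]
  · by_cases hpq : p = q
    · subst hpq
      have : ¬ (CCC (QuaternionGroup m)).Adj (f m hm (Sum.inr p)) (f m hm (Sum.inr p)) :=
        (CCC (QuaternionGroup m)).irrefl
      simp [adjMat, this, Mmat, Bmat]
    · have hφpq : (((q:ℕ)) : ZMod 2) = (((p:ℕ)) : ZMod 2) + 1 := by
        fin_cases p <;> fin_cases q <;> first | (exfalso; exact hpq rfl) | decide
      by_cases hodd : Odd m
      · have hne : f m hm (Sum.inr p) ≠ f m hm (Sum.inr q) :=
          fun h => hpq (Sum.inr.inj (f_inj hm h))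
        have hadj : (CCC (QuaternionGroup m)).Adj (f m hm (Sum.inr p)) (f m hm (Sum.inr q)) := by
          refine ⟨hne, xa ((((p:ℕ)) : ZMod (2*m))), ?_,
            xa ((((p:ℕ)) : ZMod (2*m)) + (m : ZMod (2*m))), ?_, ?_⟩
          · rw [mem_carrier_f_inr hm]; exact ⟨0, by ring⟩
          · rw [mem_carrier_f_inr hm]
            have hφ : φ ((((q:ℕ)) : ZMod (2*m)))
                = φ ((((p:ℕ)) : ZMod (2*m)) + (m : ZMod (2*m))) := by
              rw [map_add, phi_natCast, phi_natCast, phi_natCast, hφpq,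
                (natCast_zmod_two_eq_one_iff m).mpr hodd]
            obtain ⟨k, hk⟩ := exists_eq_add_two_mul hm hφ
            exact ⟨k, by rw [hk]⟩
          · show _ * _ = _ * _
            rw [xa_mul_xa, xa_mul_xa, a.injEq]
            linear_combination (h2m (m := m))
        simp [adjMat, hadj, Mmat, Bmat, hpq, hodd]
      · have hnadj : ¬ (CCC (QuaternionGroup m)).Adj (f m hm (Sum.inr p)) (f m hm (Sum.inr q)) := by
          rintro ⟨-, x, hx, y, hy, hxy⟩
          rw [mem_carrier_f_inr hm] at hx hy
          obtain ⟨k, rfl⟩ := hx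
          obtain ⟨l, rfl⟩ := hy
          have h' := hxy.eq
          rw [xa_mul_xa, xa_mul_xa, a.injEq] at h'
          have h2 : 2 * (((((q:ℕ)) : ZMod (2*m)) + 2*l) - ((((p:ℕ)) : ZMod (2*m)) + 2*k))
              = 0 := by linear_combination h'
          rw [two_mul_eq_zero_iff hm] at h2
          rcases h2 with h2 | h2
          · have := congrArg (φ (m := m)) h2
            rw [map_sub, map_add, map_add, phi_two_mul, phi_two_mul, phi_natCast, phi_natCast,
              hφpq, map_zero] at this
            simp at this
          · have := congrArg (φ (m := m)) h2
            rw [map_sub, map_add, map_add, phi_two_mul, phi_two_mul, phi_natCast, phi_natCast,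
              hφpq, phi_natCast] at this
            simp at this
            exact hodd ((natCast_zmod_two_eq_one_iff m).mp this.symm)
        simp [adjMat, hnadj, Mmat, Bmat, hodd]

end QCCC

namespace QCCC
open QuaternionGroup Polynomial

variable {m : ℕ}

lemma eigMultiset_eq {V : Type*} [iF : Fintype V] [iD : DecidableEq V] (M : Matrix V V ℝ) :
    eigMultiset M = M.charpoly.roots := by
  rw [eigMultiset, dif_pos (Finite.of_fintype V)]
  congr!

/-- the vertex enumeration as an equivalence -/
def eqv (hm : 2 ≤ m) : (Fin (m-1) ⊕ Fin 2) ≃ S m :=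
  Equiv.ofBijective _ ⟨f_inj hm, f_surj hm⟩

lemma adjMat_CCC_eq (hm : 2 ≤ m) :
    adjMat (CCC (QuaternionGroup m)) = Matrix.reindex (eqv hm) (eqv hm) (Mmat m) := by
  ext u v
  conv_lhs => rw [← (eqv hm).apply_symm_apply u, ← (eqv hm).apply_symm_apply v]
  have : ∀ p, eqv hm p = f m hm p := fun _ => rfl
  rw [this, this]
  rw [show (Matrix.reindex (eqv hm) (eqv hm) (Mmat m)) u v
    = Mmat m ((eqv hm).symm u) ((eqv hm).symm v) from rfl]
  exact adjMat_entry hm _ _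

lemma charpoly_adjMat (hm : 2 ≤ m) [instF : Fintype (S m)] [instD : DecidableEq (S m)] :
    (adjMat (CCC (QuaternionGroup m))).charpoly
      = (Kmat (m-1)).charpoly * (Bmat m).charpoly := by
  rw [adjMat_CCC_eq hm, Matrix.charpoly_reindex, Mmat, Matrix.charpoly_fromBlocks_zero₁₂]

lemma energy_aux (hm : 2 ≤ m) :
    graphEnergy (CCC (QuaternionGroup m))
      = ((m:ℝ) - 2) + ((m:ℝ) - 2) + (if Odd m then 2 else 0) := by
  haveI : NeZero m := ⟨by omega⟩
  have hfin : Finite (S m) := inferInstance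
  letI instF : Fintype (S m) := Fintype.ofFinite _
  letI instD : DecidableEq (S m) := Classical.decEq _
  rw [graphEnergy, eigMultiset_eq, charpoly_adjMat hm]
  rw [Polynomial.roots_mul
    (mul_ne_zero (Matrix.charpoly_monic _).ne_zero (Matrix.charpoly_monic _).ne_zero),
    charpoly_Kmat (m-1) (by omega), charpoly_Bmat m]
  have hX1 : ((X : ℝ[X]) + 1) = X - Polynomial.C (-1) := by
    rw [map_neg, map_one, sub_neg_eq_add]
  have hroots1 : ((X : ℝ[X]) + 1).roots = {-1} := by rw [hX1, Polynomial.roots_X_sub_C]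
  rw [Polynomial.roots_mul
      (mul_ne_zero (pow_ne_zero _ (by rw [hX1]; exact Polynomial.X_sub_C_ne_zero _))
        (Polynomial.X_sub_C_ne_zero _)),
    Polynomial.roots_pow, hroots1, Polynomial.roots_X_sub_C]
  have hcast : (((m-1 : ℕ)) : ℝ) = (m : ℝ) - 1 := by
    push_cast [Nat.cast_sub (by omega : 1 ≤ m)]
    ring
  by_cases hodd : Odd m
  · rw [if_pos hodd, Polynomial.roots_mul
      (mul_ne_zero (Polynomial.X_sub_C_ne_zero _) (Polynomial.X_sub_C_ne_zero _)),
      Polynomial.roots_X_sub_C, Polynomial.roots_X_sub_C, if_pos hodd]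
    simp only [Multiset.map_add, Multiset.sum_add, Multiset.nsmul_singleton,
      Multiset.map_replicate, Multiset.sum_replicate, Multiset.map_singleton,
      Multiset.sum_singleton, abs_neg, abs_one, smul_eq_mul, mul_one, nsmul_eq_mul]
    have h2m' : (2:ℝ) ≤ (m:ℝ) := by exact_mod_cast hm
    have e1 : ((m - 1 - 1 : ℕ) : ℝ) = (m:ℝ) - 2 := by
      have h' : m - 1 - 1 = m - 2 := by omega
      rw [h', Nat.cast_sub (by omega : 2 ≤ m)]
      norm_num
    rw [abs_of_nonneg (by rw [hcast]; linarith : (0:ℝ) ≤ ((m-1 : ℕ) : ℝ) - 1), hcast, e1]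
    ring
  · rw [if_neg hodd, Polynomial.roots_pow, Polynomial.roots_X_sub_C, if_neg hodd]
    simp only [Multiset.map_add, Multiset.sum_add, Multiset.nsmul_singleton,
      Multiset.map_replicate, Multiset.sum_replicate, Multiset.map_singleton,
      Multiset.sum_singleton, abs_neg, abs_one, smul_eq_mul, mul_one, nsmul_eq_mul,
      abs_zero, mul_zero]
    have h2m' : (2:ℝ) ≤ (m:ℝ) := by exact_mod_cast hm
    have e1 : ((m - 1 - 1 : ℕ) : ℝ) = (m:ℝ) - 2 := by
      have h' : m - 1 - 1 = m - 2 := by omega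
      rw [h', Nat.cast_sub (by omega : 2 ≤ m)]
      norm_num
    rw [abs_of_nonneg (by rw [hcast]; linarith : (0:ℝ) ≤ ((m-1 : ℕ) : ℝ) - 1), hcast, e1]
    ring

end QCCC

/-- Energy of the commuting conjugacy class graph of the dicyclic group `Q_{4m}`. -/
theorem energy_CCC_quaternion (m : ℕ) (hm : 2 ≤ m) :
    (Odd m → graphEnergy (CCC (QuaternionGroup m)) = 2 * (m : ℝ) - 2) ∧
    (Even m → graphEnergy (CCC (QuaternionGroup m)) = 2 * (m : ℝ) - 4) := by
  constructor
  · intro hodd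
    rw [QCCC.energy_aux hm, if_pos hodd]
    ring
  · intro heven
    rw [QCCC.energy_aux hm, if_neg (Nat.not_odd_iff_even.mpr heven)]
    ring

end
end
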